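/- arXiv:1210.2575 — 2 statements merged into one kernel-verified Lean document; each statement's English description precedes it below -/
import Mathlib

section
/- For positive weights w and orthogonal projectors P₁, P₂ of ranks k₁, k₂, letting m(k₁,k₂) = (w(k₁)²k₁ + w(k₂)²k₂)/2, it holds that m(k₁,k₂) − w(k₁)w(k₂)min{k₁,k₂} ≤ D_w²(P₁,P₂) ≤ m(k₁,k₂) − w(k₁)w(k₂)max{k₁+k₂−p, 0}. -/
open Matrix

/-- Squared Frobenius norm of a real matrix. -/
def frobSq {p : ℕ} (A : Matrix (Fin p) (Fin p) ℝ) : ℝ := (Aᵀ * A).trace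

lemma trace_tm_self_nonneg {p : ℕ} (A : Matrix (Fin p) (Fin p) ℝ) :
    0 ≤ (Aᵀ * A).trace := by
  rw [Matrix.trace]
  apply Finset.sum_nonneg
  intro j _
  rw [Matrix.diag_apply, Matrix.mul_apply]
  apply Finset.sum_nonneg
  intro i _
  simp [Matrix.transpose_apply, mul_self_nonneg]

lemma trace_proj_mul_nonneg {p : ℕ} (P Q : Matrix (Fin p) (Fin p) ℝ)
    (hPs : P.IsSymm) (hPi : P * P = P) (hQs : Q.IsSymm) (hQi : Q * Q = Q) :
    0 ≤ (P * Q).trace := by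
  have key : ((Q * P)ᵀ * (Q * P)).trace = (P * Q).trace := by
    rw [Matrix.transpose_mul, hPs.eq, hQs.eq]
    have : P * Q * (Q * P) = P * Q * P := by
      rw [mul_assoc P Q (Q * P), ← mul_assoc Q Q P, hQi, ← mul_assoc]
    rw [this, Matrix.trace_mul_comm, ← mul_assoc, hPi]
  rw [← key]
  exact trace_tm_self_nonneg _

lemma trace_eq_rank {p : ℕ} (P : Matrix (Fin p) (Fin p) ℝ)
    (hPi : P * P = P) : P.trace = (P.rank : ℝ) := by
  have hproj : LinearMap.IsProj (LinearMap.range P.mulVecLin) P.mulVecLin := by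
    constructor
    · intro x; exact LinearMap.mem_range_self _ x
    · rintro x ⟨y, rfl⟩
      simp [Matrix.mulVecLin_apply, Matrix.mulVec_mulVec, hPi]
  have := hproj.trace
  rw [Matrix.rank]
  rw [← this]
  rw [LinearMap.trace_eq_matrix_trace ℝ (Pi.basisFun ℝ (Fin p))]
  congr 1
  rw [LinearMap.toMatrix_eq_toMatrix', ← Matrix.toLin'_apply', LinearMap.toMatrix'_toLin']

theorem stmt_8 (p k₁ k₂ : ℕ) (w : ℕ → ℝ) (hw : ∀ k, 0 < w k)
    (P₁ P₂ : Matrix (Fin p) (Fin p) ℝ)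
    (h₁s : P₁.IsSymm) (h₁i : P₁ * P₁ = P₁) (h₁r : P₁.rank = k₁)
    (h₂s : P₂.IsSymm) (h₂i : P₂ * P₂ = P₂) (h₂r : P₂.rank = k₂) :
    ((w k₁) ^ 2 * k₁ + (w k₂) ^ 2 * k₂) / 2 - w k₁ * w k₂ * (min k₁ k₂ : ℕ)
        ≤ (1 / 2) * frobSq (w k₁ • P₁ - w k₂ • P₂) ∧
      (1 / 2) * frobSq (w k₁ • P₁ - w k₂ • P₂)
        ≤ ((w k₁) ^ 2 * k₁ + (w k₂) ^ 2 * k₂) / 2 -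
            w k₁ * w k₂ * ((max ((k₁ : ℤ) + (k₂ : ℤ) - (p : ℤ)) 0 : ℤ) : ℝ) := by
  set w₁ := w k₁ with hw₁
  set w₂ := w k₂ with hw₂
  have hw₁p := hw k₁
  have hw₂p := hw k₂
  have ht₁ : P₁.trace = (k₁ : ℝ) := by rw [trace_eq_rank P₁ h₁i, h₁r]
  have ht₂ : P₂.trace = (k₂ : ℝ) := by rw [trace_eq_rank P₂ h₂i, h₂r]
  set t := (P₁ * P₂).trace with htdef
  -- expand frobSq
  have h21 : (P₂ * P₁).trace = t := (Matrix.trace_mul_comm P₂ P₁).trans htdef.symm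
  have hexp : frobSq (w₁ • P₁ - w₂ • P₂)
      = w₁ ^ 2 * k₁ + w₂ ^ 2 * k₂ - 2 * (w₁ * w₂) * t := by
    rw [frobSq, Matrix.transpose_sub, Matrix.transpose_smul, Matrix.transpose_smul,
      h₁s.eq, h₂s.eq, Matrix.sub_mul, Matrix.mul_sub, Matrix.mul_sub]
    simp only [Matrix.smul_mul, Matrix.mul_smul, smul_smul, Matrix.trace_sub,
      Matrix.trace_smul, h₁i, h₂i, ht₁, ht₂, h21, smul_eq_mul, ← htdef]
    ring
  -- bounds on t
  have htnn : 0 ≤ t := trace_proj_mul_nonneg P₁ P₂ h₁s h₁i h₂s h₂i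
  -- complementary projectors
  have hcs : ∀ (P : Matrix (Fin p) (Fin p) ℝ), P.IsSymm → (1 - P).IsSymm := by
    intro P hP
    rw [Matrix.IsSymm, Matrix.transpose_sub, Matrix.transpose_one, hP.eq]
  have hci : ∀ (P : Matrix (Fin p) (Fin p) ℝ), P * P = P → (1 - P) * (1 - P) = 1 - P := by
    intro P hP
    rw [Matrix.sub_mul, Matrix.mul_sub, Matrix.mul_sub, hP]
    simp
  have htr1 : (1 : Matrix (Fin p) (Fin p) ℝ).trace = (p : ℝ) := by
    simp [Matrix.trace_one]
  have hub1 : t ≤ (k₁ : ℝ) := by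
    have h := trace_proj_mul_nonneg P₁ (1 - P₂) h₁s h₁i (hcs P₂ h₂s) (hci P₂ h₂i)
    have e : P₁ * (1 - P₂) = P₁ - P₁ * P₂ := by rw [Matrix.mul_sub, Matrix.mul_one]
    rw [e, Matrix.trace_sub, ht₁] at h
    linarith [htdef]
  have hub2 : t ≤ (k₂ : ℝ) := by
    have h := trace_proj_mul_nonneg (1 - P₁) P₂ (hcs P₁ h₁s) (hci P₁ h₁i) h₂s h₂i
    have e : (1 - P₁) * P₂ = P₂ - P₁ * P₂ := by rw [Matrix.sub_mul, Matrix.one_mul]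
    rw [e, Matrix.trace_sub, ht₂] at h
    linarith [htdef]
  have hlb : (k₁ : ℝ) + k₂ - p ≤ t := by
    have h := trace_proj_mul_nonneg (1 - P₁) (1 - P₂) (hcs P₁ h₁s) (hci P₁ h₁i)
      (hcs P₂ h₂s) (hci P₂ h₂i)
    have e : (1 - P₁) * (1 - P₂) = 1 - P₁ - P₂ + P₁ * P₂ := by noncomm_ring
    rw [e, Matrix.trace_add, Matrix.trace_sub, Matrix.trace_sub, htr1, ht₁, ht₂] at h
    linarith [htdef]
  have hmin : ((min k₁ k₂ : ℕ) : ℝ) = min (k₁ : ℝ) (k₂ : ℝ) := by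
    push_cast
    rfl
  have hmax : ((max ((k₁ : ℤ) + (k₂ : ℤ) - (p : ℤ)) 0 : ℤ) : ℝ)
      = max ((k₁ : ℝ) + k₂ - p) 0 := by
    push_cast
    rfl
  have hwpos : 0 < w₁ * w₂ := mul_pos hw₁p hw₂p
  constructor
  · rw [hexp, hmin]
    have : t ≤ min (k₁ : ℝ) (k₂ : ℝ) := le_min hub1 hub2
    nlinarith [mul_le_mul_of_nonneg_left this (le_of_lt hwpos)]
  · rw [hexp, hmax]
    have : max ((k₁ : ℝ) + k₂ - p) 0 ≤ t := max_le hlb htnn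
    nlinarith [mul_le_mul_of_nonneg_left this (le_of_lt hwpos)]
end

section
/- With the unit weight w_a(k)=1, D_{w_a}²(P₁,P₂) ≤ p/2 for all p×p orthogonal projectors P₁, P₂, and D_{w_a}²(P₁,P₂) = p/2 if and only if P₁P₂ = 0 and P₁ + P₂ = I_p. -/
open Matrix

lemma frobSq_as_sum {p : ℕ} (A : Matrix (Fin p) (Fin p) ℝ) :
    frobSq A = ∑ i, ∑ j, A j i * A j i := by
  unfold frobSq
  simp [Matrix.trace, Matrix.mul_apply, Matrix.diag]

lemma frobSq_nonneg {p : ℕ} (A : Matrix (Fin p) (Fin p) ℝ) : 0 ≤ frobSq A := by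
  rw [frobSq_as_sum]
  exact Finset.sum_nonneg fun i _ => Finset.sum_nonneg fun j _ => mul_self_nonneg _

lemma frobSq_eq_zero_iff {p : ℕ} (A : Matrix (Fin p) (Fin p) ℝ) :
    frobSq A = 0 ↔ A = 0 := by
  rw [frobSq_as_sum]
  constructor
  · intro h
    ext j i
    have h1 := (Finset.sum_eq_zero_iff_of_nonneg
      (fun i _ => Finset.sum_nonneg fun j _ => mul_self_nonneg (A j i))).1 h i (Finset.mem_univ i)
    have h2 := (Finset.sum_eq_zero_iff_of_nonneg
      (fun j _ => mul_self_nonneg (A j i))).1 h1 j (Finset.mem_univ j)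
    simpa [mul_self_eq_zero] using h2
  · intro h; simp [h]

theorem stmt_14 (p : ℕ) (P₁ P₂ : Matrix (Fin p) (Fin p) ℝ)
    (h₁s : P₁.IsSymm) (h₁i : P₁ * P₁ = P₁)
    (h₂s : P₂.IsSymm) (h₂i : P₂ * P₂ = P₂) :
    (1 / 2) * frobSq (P₁ - P₂) ≤ (p : ℝ) / 2 ∧
      ((1 / 2) * frobSq (P₁ - P₂) = (p : ℝ) / 2 ↔ P₁ * P₂ = 0 ∧ P₁ + P₂ = 1) := by
  have hm : (P₁ - P₂) * (P₁ - P₂) + (1 - P₁ - P₂) * (1 - P₁ - P₂) = 1 := by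
    simp only [mul_sub, sub_mul, mul_one, one_mul, h₁i, h₂i]
    abel
  have key : frobSq (P₁ - P₂) + frobSq (1 - P₁ - P₂) = (p : ℝ) := by
    unfold frobSq
    rw [transpose_sub, transpose_sub, transpose_sub, transpose_one, h₁s.eq, h₂s.eq,
      ← trace_add, hm, trace_one]
    simp
  have hq := frobSq_nonneg (1 - P₁ - P₂)
  constructor
  · linarith
  constructor
  · intro h
    have hq0 : frobSq (1 - P₁ - P₂) = 0 := by linarith
    have hQ : (1 : Matrix (Fin p) (Fin p) ℝ) - P₁ - P₂ = 0 := (frobSq_eq_zero_iff _).1 hq0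
    have hsum : P₁ + P₂ = 1 := by
      have h := sub_eq_zero.1 (by rwa [sub_sub] at hQ)
      exact h.symm
    refine ⟨?_, hsum⟩
    have hP2 : P₂ = 1 - P₁ := eq_sub_of_add_eq' hsum
    rw [hP2, mul_sub, mul_one, h₁i, sub_self]
  · rintro ⟨hmul, hsum⟩
    have : (1 : Matrix (Fin p) (Fin p) ℝ) - P₁ - P₂ = 0 := by
      rw [sub_sub, hsum, sub_self]
    have hz : frobSq (1 - P₁ - P₂) = 0 := by rw [this]; exact (frobSq_eq_zero_iff _).2 rfl
    linarith
end
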